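/- arXiv:1908.03172 — 3 statements merged into one kernel-verified Lean document; each statement's English description precedes it below -/
import Mathlib

section
/- Let G be a minimally non-(3,4)-colorable graph. Then every edge of G has an endpoint of degree at least 5. -/
/-- The degree of a vertex: the number of its neighbors. -/
noncomputable def degN {V : Type*} (G : SimpleGraph V) (v : V) : ℕ :=
  {w | G.Adj v w}.ncard

/-- `c` is a (3,4)-coloring of `G`: every vertex gets value 3 or 4, and every
vertex with value `i` has at most `i` neighbors with value `i`. -/
def IsColoring34 {V : Type*} (G : SimpleGraph V) (c : V → ℕ) : Prop :=
  (∀ v, c v = 3 ∨ c v = 4) ∧ ∀ v, {w | G.Adj v w ∧ c w = c v}.ncard ≤ c v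

/-- `G` is (3,4)-colorable. -/
def Colorable34 {V : Type*} (G : SimpleGraph V) : Prop :=
  ∃ c, IsColoring34 G c

/-- The graph `G − v` obtained by deleting the vertex `v` and its incident edges
(keeping `v` as an isolated vertex, which does not affect (3,4)-colorability). -/
def deleteVert {V : Type*} (G : SimpleGraph V) (v : V) : SimpleGraph V where
  Adj a b := G.Adj a b ∧ a ≠ v ∧ b ≠ v
  symm := ⟨fun _ _ ⟨h, ha, hb⟩ => ⟨h.symm, hb, ha⟩⟩
  loopless := ⟨fun a ⟨h, _, _⟩ => G.loopless.irrefl a h⟩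

/-- `G` is minimally non-(3,4)-colorable. -/
def MinNonColorable34 {V : Type*} (G : SimpleGraph V) : Prop :=
  ¬ Colorable34 G ∧ (∀ v, Colorable34 (deleteVert G v)) ∧
    ∀ e ∈ G.edgeSet, Colorable34 (G.deleteEdges {e})

/-- `u` is `i`-saturated under the coloring `c` of the graph `G`. -/
def Saturated34 {V : Type*} (G : SimpleGraph V) (c : V → ℕ) (i : ℕ) (u : V) : Prop :=
  c u = i ∧ {w | G.Adj u w ∧ c w = i}.ncard = i

/-- `u` can be recolored: changing the color of `u` to the other color
(`7 - c u` swaps 3 and 4) again yields a (3,4)-coloring of `G`. -/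
def Recolorable34 {V : Type*} [DecidableEq V] (G : SimpleGraph V) (c : V → ℕ) (u : V) : Prop :=
  IsColoring34 G (Function.update c u (7 - c u))

/-- The number of 3^+-neighbors of `x` in `G` (neighbors of degree at least 3). -/
noncomputable def tpn {V : Type*} (G : SimpleGraph V) (x : V) : ℕ :=
  {w | G.Adj x w ∧ 3 ≤ degN G w}.ncard

/-- A 5p-vertex (poor 5-vertex): degree 5 with exactly one 3^+-neighbor. -/
def Is5p {V : Type*} (G : SimpleGraph V) (x : V) : Prop := degN G x = 5 ∧ tpn G x = 1

/-- A 5s-vertex (semi-poor 5-vertex): degree 5 with exactly two 3^+-neighbors. -/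
def Is5s {V : Type*} (G : SimpleGraph V) (x : V) : Prop := degN G x = 5 ∧ tpn G x = 2

/-- A 6p-vertex (poor 6-vertex): degree 6 with exactly one 3^+-neighbor. -/
def Is6p {V : Type*} (G : SimpleGraph V) (x : V) : Prop := degN G x = 6 ∧ tpn G x = 1

/-- `G` has girth at least 5: no 3-cycles and no 4-cycles. -/
def GirthAtLeast5 {V : Type*} (G : SimpleGraph V) : Prop :=
  (∀ a b c : V, G.Adj a b → G.Adj b c → ¬ G.Adj c a) ∧
  (∀ a b c d : V, a ≠ c → b ≠ d →
    G.Adj a b → G.Adj b c → G.Adj c d → ¬ G.Adj d a)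

/-
Let `c` be a (3,4)-coloring of `G − xy`, where both `x` and `y` have degree at most 4. Putting the
edge back only matters at `x` and `y`, and only when `c x = c y`. With colour 4 the degree bound
already suffices. With colour 3 the edge can only break the condition at an endpoint, say `x`, all of
whose at most four neighbours are coloured 3; then recolouring `x` with 4 in `G − xy` is still a
coloring, and now the endpoints of `xy` get different colours.
-/

open SimpleGraph

section

variable {V : Type*} {G H : SimpleGraph V} {c : V → ℕ} {v x y : V}

lemma sameColor_subset_deleteEdges (hv : c x ≠ c y ∨ v ≠ x ∧ v ≠ y) :
    {w | G.Adj v w ∧ c w = c v} ⊆ {w | (G.deleteEdges {s(x, y)}).Adj v w ∧ c w = c v} := by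
  rintro w ⟨hw, hcw⟩
  refine ⟨?_, hcw⟩
  simp only [deleteEdges_adj, hw, Set.mem_singleton_iff, Sym2.eq_iff, true_and]
  rintro (⟨rfl, rfl⟩ | ⟨rfl, rfl⟩) <;> grind

variable [Finite V]

lemma ncard_adj_le_degN (G : SimpleGraph V) (v : V) (p : V → Prop) :
    {w | G.Adj v w ∧ p w}.ncard ≤ degN G v :=
  Set.ncard_le_ncard (fun _ hw => hw.1)

lemma degN_mono (h : H ≤ G) (v : V) : degN H v ≤ degN G v :=
  Set.ncard_le_ncard (fun _ hw => h hw)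

lemma forall_adj_of_degN_le_ncard {n : ℕ} {p : V → Prop} (hdeg : degN G x ≤ n)
    (hp : n ≤ {w | G.Adj x w ∧ p w}.ncard) : ∀ w, G.Adj x w → p w := by
  have heq : {w | G.Adj x w ∧ p w} = {w | G.Adj x w} :=
    Set.eq_of_subset_of_ncard_le (fun _ hw => hw.1) (hdeg.trans hp)
  intro w hw
  exact (heq.symm ▸ hw : w ∈ {w | G.Adj x w ∧ p w}).2

lemma IsColoring34.update_four [DecidableEq V] (hc : IsColoring34 H c) (hdeg : degN H x ≤ 4)
    (hnbr : ∀ w, H.Adj x w → c w = 3) : IsColoring34 H (Function.update c x 4) := by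
  refine ⟨fun v => ?_, fun v => ?_⟩
  · rcases eq_or_ne v x with rfl | hv
    · simp
    · simpa [hv] using hc.1 v
  rcases eq_or_ne v x with rfl | hv
  · simpa only [Function.update_self] using (ncard_adj_le_degN H v _).trans hdeg
  rw [Function.update_of_ne hv]
  have hsub : {w | H.Adj v w ∧ Function.update c x 4 w = c v} ⊆ {w | H.Adj v w ∧ c w = c v} := by
    rintro w ⟨hw, hcw⟩
    refine ⟨hw, ?_⟩
    rcases eq_or_ne w x with rfl | hwx
    · rw [Function.update_self, hnbr v hw.symm] at hcw
      omega
    · rwa [Function.update_of_ne hwx] at hcw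
  exact (Set.ncard_le_ncard hsub).trans (hc.2 v)

lemma IsColoring34.of_deleteEdges_of_ne (hc : IsColoring34 (G.deleteEdges {s(x, y)}) c)
    (hne : c x ≠ c y) : IsColoring34 G c :=
  ⟨hc.1, fun v => (Set.ncard_le_ncard (sameColor_subset_deleteEdges (Or.inl hne))).trans (hc.2 v)⟩

lemma IsColoring34.of_deleteEdges (hc : IsColoring34 (G.deleteEdges {s(x, y)}) c)
    (hx : {w | G.Adj x w ∧ c w = c x}.ncard ≤ c x)
    (hy : {w | G.Adj y w ∧ c w = c y}.ncard ≤ c y) : IsColoring34 G c := by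
  refine ⟨hc.1, fun v => ?_⟩
  by_cases hvx : v = x
  · exact hvx ▸ hx
  by_cases hvy : v = y
  · exact hvy ▸ hy
  exact (Set.ncard_le_ncard (sameColor_subset_deleteEdges (Or.inr ⟨hvx, hvy⟩))).trans (hc.2 v)

lemma colorable34_of_deleteEdges_of_four_le (hxy : G.Adj x y) (hdeg : degN G x ≤ 4)
    (hc : IsColoring34 (G.deleteEdges {s(x, y)}) c) (hcy : c y = 3)
    (hsat : 4 ≤ {w | G.Adj x w ∧ c w = 3}.ncard) : Colorable34 G := by
  classical
  have hnbr : ∀ w, (G.deleteEdges {s(x, y)}).Adj x w → c w = 3 := fun w hw =>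
    forall_adj_of_degN_le_ncard hdeg hsat w (deleteEdges_le _ hw)
  have hc' := hc.update_four ((degN_mono (deleteEdges_le _) x).trans hdeg) hnbr
  refine ⟨_, hc'.of_deleteEdges_of_ne ?_⟩
  rw [Function.update_self, Function.update_of_ne hxy.ne.symm, hcy]
  omega

lemma colorable34_of_deleteEdges (hxy : G.Adj x y) (hx : degN G x ≤ 4) (hy : degN G y ≤ 4)
    (hc : IsColoring34 (G.deleteEdges {s(x, y)}) c) : Colorable34 G := by
  rcases ne_or_eq (c x) (c y) with hne | heq
  · exact ⟨c, hc.of_deleteEdges_of_ne hne⟩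
  rcases hc.1 x with h3 | h4
  · have h3y : c y = 3 := heq ▸ h3
    by_cases hsx : 4 ≤ {w | G.Adj x w ∧ c w = 3}.ncard
    · exact colorable34_of_deleteEdges_of_four_le hxy hx hc h3y hsx
    by_cases hsy : 4 ≤ {w | G.Adj y w ∧ c w = 3}.ncard
    · rw [Sym2.eq_swap] at hc
      exact colorable34_of_deleteEdges_of_four_le hxy.symm hy hc h3 hsy
    exact ⟨c, hc.of_deleteEdges (by rw [h3]; omega) (by rw [h3y]; omega)⟩
  · have h4y : c y = 4 := heq ▸ h4
    refine ⟨c, hc.of_deleteEdges ?_ ?_⟩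
    · exact (ncard_adj_le_degN G x _).trans (h4 ▸ hx)
    · exact (ncard_adj_le_degN G y _).trans (h4y ▸ hy)

end

/-- In a minimally non-(3,4)-colorable graph, every edge has an
endpoint of degree at least 5. -/
theorem stmt_1 {V : Type*} [Fintype V] (G : SimpleGraph V)
    (hG : MinNonColorable34 G) :
    ∀ x y : V, G.Adj x y → 5 ≤ degN G x ∨ 5 ≤ degN G y := by
  intro x y hxy
  by_contra! hdeg
  obtain ⟨c, hc⟩ := hG.2.2 s(x, y) hxy
  exact hG.1 (colorable34_of_deleteEdges hxy (by omega) (by omega) hc)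
end

section
/- Let G be a finite simple graph that is not (3,4)-colorable, let v be a vertex of G with deg(v) ∈ {4, 5}, and let c be a (3,4)-coloring of G − v. Then v has a neighbor u in G such that u is 4-saturated under c and u is either a vertex of degree at least 9, or a vertex of degree at least 6 with at least two 3^+-neighbors. -/
/-!
Suppose every 4-saturated neighbour `u` of `v` has degree at most 8 and either degree at most 5
or at most one 3^+-neighbour. Recolouring such a `u` from 4 to 3 keeps a (3,4)-colouring of
`G − v`: `u` has at most 3 neighbours coloured 3 in `G − v`, and each of them has degree at
most 2 (the 3^+-neighbour `v` uses up the budget of `u`), so none of them is 3-saturated. The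
recolouring creates no new 4-saturated vertex and lowers the number of vertices coloured 4, so
after finitely many steps no neighbour of `v` is 4-saturated. Then `v` can be coloured: with 4
if at most four of its neighbours are coloured 4, and otherwise with 3, since then all of its
at most five neighbours are coloured 4.
-/

section

variable {V : Type*} {G : SimpleGraph V} {c : V → ℕ} {u v x : V}

theorem deleteVert_le : deleteVert G v ≤ G :=
  fun _ _ h => h.1

variable [Finite V]

theorem IsColoring34.anti {H : SimpleGraph V} (hHG : H ≤ G) (hc : IsColoring34 G c) :
    IsColoring34 H c :=
  ⟨hc.1, fun x =>
    (Set.ncard_le_ncard (Set.ofPred_subset_ofPred.2 fun _ hw => ⟨hHG hw.1, hw.2⟩)).trans (hc.2 x)⟩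

theorem ncard_le_degN {s : Set V} (hs : ∀ w ∈ s, G.Adj x w) : s.ncard ≤ degN G x :=
  Set.ncard_le_ncard hs

theorem degN_eq_ncard_three_add_ncard_four (hcol : ∀ w, c w = 3 ∨ c w = 4) (x : V) :
    degN G x = {w | G.Adj x w ∧ c w = 3}.ncard + {w | G.Adj x w ∧ c w = 4}.ncard := by
  have hdisj : Disjoint {w | G.Adj x w ∧ c w = 3} {w | G.Adj x w ∧ c w = 4} := by
    rw [Set.disjoint_left]
    rintro w ⟨-, h3⟩ ⟨-, h4⟩
    omega
  rw [degN, ← Set.ncard_union_eq hdisj]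
  congr 1
  ext w
  have := hcol w
  simp only [Set.mem_union, Set.mem_ofPred_eq]
  tauto

theorem degN_deleteVert_add_one_le (hvu : G.Adj v u) : degN (deleteVert G v) u + 1 ≤ degN G u := by
  have hv : v ∉ {w | (deleteVert G v).Adj u w} := fun h => h.2.2 rfl
  rw [degN, ← Set.ncard_insert_of_notMem hv]
  exact ncard_le_degN (by rintro w (rfl | hw); exacts [hvu.symm, hw.1])

theorem degN_le_two_of_tpn_le_one (huv : G.Adj u v) (hv : 3 ≤ degN G v) (hu : tpn G u ≤ 1)
    (hux : G.Adj u x) (hxv : x ≠ v) : degN G x ≤ 2 := by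
  by_contra! hx
  have hpair : ({x, v} : Set V).ncard ≤ tpn G u :=
    Set.ncard_le_ncard (by rintro w (rfl | rfl); exacts [⟨hux, hx⟩, ⟨huv, hv⟩])
  rw [Set.ncard_pair hxv] at hpair
  omega

variable [DecidableEq V]

-- Serves both to colour `v` and, through `IsColoring34.anti`, to recolour a vertex `u` of `G − v`.
theorem isColoring34_update_of_deleteVert {i : ℕ} (hi : i = 3 ∨ i = 4)
    (hc : IsColoring34 (deleteVert G u) c) (hu : {w | G.Adj u w ∧ c w = i}.ncard ≤ i)
    (hnbr : ∀ w, G.Adj u w → ¬ Saturated34 (deleteVert G u) c i w) :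
    IsColoring34 G (Function.update c u i) := by
  refine ⟨fun x => ?_, fun x => ?_⟩
  · rcases eq_or_ne x u with rfl | hx
    · simpa using hi
    · simpa [hx] using hc.1 x
  rcases eq_or_ne x u with rfl | hx
  · rw [Function.update_self]
    refine le_of_eq_of_le (congrArg Set.ncard (Set.ext fun w => and_congr_right fun hw => ?_)) hu
    rw [Function.update_of_ne hw.ne']
  rw [Function.update_of_ne hx]
  set S := {w | (deleteVert G u).Adj x w ∧ c w = c x}
  have hsub : {w | G.Adj x w ∧ Function.update c u i w = c x} ⊆ insert u S := by
    rintro w ⟨hxw, hw⟩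
    rcases eq_or_ne w u with rfl | hwu
    · exact Set.mem_insert _ _
    · rw [Function.update_of_ne hwu] at hw
      exact Or.inr ⟨⟨hxw, hx, hwu⟩, hw⟩
  by_cases hux : G.Adj u x ∧ c x = i
  · obtain ⟨hux, rfl⟩ := hux
    have hS : S.ncard < c x :=
      (hc.2 x).lt_of_ne fun h => hnbr x hux ⟨rfl, h⟩
    calc _ ≤ (insert u S).ncard := Set.ncard_le_ncard hsub
      _ ≤ S.ncard + 1 := Set.ncard_insert_le _ _
      _ ≤ c x := hS
  · have hmem : u ∉ {w | G.Adj x w ∧ Function.update c u i w = c x} := fun h =>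
      hux ⟨h.1.symm, by simpa using h.2.symm⟩
    exact (Set.ncard_le_ncard ((Set.subset_insert_iff_of_notMem hmem).1 hsub)).trans (hc.2 x)

theorem colorable34_of_forall_not_saturated (hv : degN G v ≤ 5)
    (hc : IsColoring34 (deleteVert G v) c)
    (hnbr : ∀ u, G.Adj v u → ¬ Saturated34 (deleteVert G v) c 4 u) : Colorable34 G := by
  by_cases h4 : {w | G.Adj v w ∧ c w = 4}.ncard ≤ 4
  · exact ⟨_, isColoring34_update_of_deleteVert (Or.inr rfl) hc h4 hnbr⟩
  have hsplit := degN_eq_ncard_three_add_ncard_four (G := G) hc.1 v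
  refine ⟨_, isColoring34_update_of_deleteVert (Or.inl rfl) hc (by omega) fun w hvw hw => ?_⟩
  have := (Set.ncard_pos (s := {w | G.Adj v w ∧ c w = 3})).2 ⟨w, hvw, hw.1⟩
  omega

theorem Saturated34.of_update_three (hc : IsColoring34 G c)
    (hu : Saturated34 G (Function.update c x 3) 4 u) : Saturated34 G c 4 u := by
  have hux : u ≠ x := by
    rintro rfl
    simpa using hu.1
  have hcu : c u = 4 := by simpa [hux] using hu.1
  have hsub : {w | G.Adj u w ∧ Function.update c x 3 w = 4} ⊆ {w | G.Adj u w ∧ c w = 4} := by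
    rintro w ⟨huw, hw⟩
    rcases eq_or_ne w x with rfl | hwx
    · simp at hw
    · exact ⟨huw, by simpa [hwx] using hw⟩
  have hle := hc.2 u
  rw [hcu] at hle
  exact ⟨hcu, le_antisymm hle (hu.2.symm.trans_le (Set.ncard_le_ncard hsub))⟩

theorem ncard_update_lt {i j : ℕ} (hij : i ≠ j) (hx : c x = j) :
    {w | Function.update c x i w = j}.ncard < {w | c w = j}.ncard := by
  refine Set.ncard_lt_ncard ((Set.ssubset_iff_of_subset fun w hw => ?_).2 ⟨x, hx, by simpa⟩)
  rcases eq_or_ne w x with rfl | hwx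
  · simp_all
  · simpa [hwx] using hw

theorem isColoring34_update_three_of_saturated (hv : 3 ≤ degN G v)
    (hc : IsColoring34 (deleteVert G v) c) (hvu : G.Adj v u)
    (hu : Saturated34 (deleteVert G v) c 4 u) (hu8 : degN G u ≤ 8)
    (hpoor : degN G u ≤ 5 ∨ tpn G u ≤ 1) :
    IsColoring34 (deleteVert G v) (Function.update c u 3) := by
  have hsplit := degN_eq_ncard_three_add_ncard_four (G := deleteVert G v) hc.1 u
  have hdeg := degN_deleteVert_add_one_le hvu
  rw [hu.2] at hsplit
  refine isColoring34_update_of_deleteVert (Or.inl rfl) (hc.anti deleteVert_le)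
    (by omega) ?_
  rintro x hux ⟨hx3, hx⟩
  rcases hpoor with hu5 | hu1
  · have := (Set.ncard_pos (s := {w | (deleteVert G v).Adj u w ∧ c w = 3})).2 ⟨x, hux, hx3⟩
    omega
  · have hx2 := degN_le_two_of_tpn_le_one hvu.symm hv hu1 hux.1 hux.2.2
    have hx3 : 3 ≤ degN G x := hx ▸ ncard_le_degN fun _ hw => hw.1.1.1
    omega

theorem colorable34_of_saturated_neighbours_degN_le (hv3 : 3 ≤ degN G v)
    (hv5 : degN G v ≤ 5) (c : V → ℕ) (hc : IsColoring34 (deleteVert G v) c)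
    (hsat : ∀ u, G.Adj v u → Saturated34 (deleteVert G v) c 4 u →
      degN G u ≤ 8 ∧ (degN G u ≤ 5 ∨ tpn G u ≤ 1)) :
    Colorable34 G := by
  induction hn : {w | c w = 4}.ncard using Nat.strong_induction_on generalizing c with
  | _ n ih =>
  by_cases h : ∃ u, G.Adj v u ∧ Saturated34 (deleteVert G v) c 4 u
  · obtain ⟨u, hvu, hu⟩ := h
    obtain ⟨hu8, hpoor⟩ := hsat u hvu hu
    exact ih _ (hn ▸ ncard_update_lt (by decide) hu.1) _
      (isColoring34_update_three_of_saturated hv3 hc hvu hu hu8 hpoor)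
      (fun w hvw hw => hsat w hvw (hw.of_update_three hc)) rfl
  · push Not at h
    exact colorable34_of_forall_not_saturated hv5 hc h

end

/-- If `G` is not (3,4)-colorable, `deg v ∈ {4, 5}`, and `c` is a
(3,4)-coloring of `G − v`, then `v` has a 4-saturated neighbor that is either a
`9⁺`-vertex or a `6⁺`-vertex with at least two 3^+-neighbors. -/
theorem stmt_6 {V : Type*} [Fintype V] (G : SimpleGraph V) (v : V)
    (hG : ¬ Colorable34 G) (hv : degN G v = 4 ∨ degN G v = 5)
    (c : V → ℕ) (hc : IsColoring34 (deleteVert G v) c) :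
    ∃ u : V, G.Adj v u ∧ Saturated34 (deleteVert G v) c 4 u ∧
      (9 ≤ degN G u ∨ (6 ≤ degN G u ∧ 2 ≤ tpn G u)) := by
  classical
  by_contra! hcon
  refine hG (colorable34_of_saturated_neighbours_degN_le (by omega) (by omega) c hc
    fun u hvu hu => ?_)
  have := hcon u hvu hu
  omega
end

section
/- Let G be a minimally non-(3,4)-colorable graph with girth at least 5, and let u_1 u_2 u_3 u_4 u_5 u_6 be a 6-cycle in G such that u_1, u_3, u_5 have degree 2 and u_4 has degree 5. Then u_2 and u_6 both have degree at least 7. -/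
/-!
Label the 6-cycle `q p x y z r`, so that `q`, `x`, `z` have degree 2 and `y` has degree 5, and
suppose `deg p ≤ 6`. Take a (3,4)-coloring `c` of `G - xy`. Since `G` is not colorable, `c` fails
on `G`, and only at `y`: hence `c x = c y = 3` and `y` has four 3-neighbors (were `c y = 4`, all
neighbors of `y` would have color 4 and `y` could be recolored 3), and then also `c z = 3`.
Recoloring `x` to 4 must overload `p`, so `p` is 4-saturated and, having degree at most 6, has at
most two 3-neighbors. This forces `c q = 4` (else recolor `x` to 4 and `p` to 3). Recoloring `q`
to 3 and `x` to 4 must then overload `r`, so `c r = 3`; but then recoloring `z` to 4 colors `G`.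
Reversing the cycle gives the bound for `r`.
-/

open Function

def colorNbrs {V : Type*} (G : SimpleGraph V) (c : V → ℕ) (v : V) (i : ℕ) : Set V :=
  {w | G.Adj v w ∧ c w = i}

section ColorNbrs

variable {V : Type*} {G : SimpleGraph V} {c : V → ℕ}

theorem colorNbrs_subset_neighborSet (v : V) (i : ℕ) : colorNbrs G c v i ⊆ G.neighborSet v :=
  fun _ hw => hw.1

theorem ncard_colorNbrs_le_degN [Finite V] (v : V) (i : ℕ) :
    (colorNbrs G c v i).ncard ≤ degN G v :=
  Set.ncard_le_ncard (colorNbrs_subset_neighborSet v i)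

theorem ncard_colorNbrs_le_of_degN_le [Finite V] {v : V} (hv : degN G v ≤ 3)
    (hcv : c v = 3 ∨ c v = 4) (i : ℕ) : (colorNbrs G c v i).ncard ≤ c v :=
  (ncard_colorNbrs_le_degN v i).trans (by omega)

theorem ncard_colorNbrs_three_add_four [Finite V] (hc : ∀ w, c w = 3 ∨ c w = 4) (v : V) :
    (colorNbrs G c v 3).ncard + (colorNbrs G c v 4).ncard = degN G v := by
  have hdisj : Disjoint (colorNbrs G c v 3) (colorNbrs G c v 4) :=
    Set.disjoint_left.mpr fun w h3 h4 => by simp_all [colorNbrs]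
  rw [← Set.ncard_union_eq hdisj]
  congr 1
  ext w
  have := hc w
  simp only [colorNbrs, Set.mem_union, Set.mem_ofPred_eq]
  tauto

theorem colorNbrs_deleteEdges_of_ne {x y v : V} (hvx : v ≠ x) (hvy : v ≠ y) (i : ℕ) :
    colorNbrs (G.deleteEdges {s(x, y)}) c v i = colorNbrs G c v i := by
  ext w
  simp [colorNbrs, hvx, hvy]

theorem colorNbrs_deleteEdges_right {x y : V} (i : ℕ) :
    colorNbrs (G.deleteEdges {s(x, y)}) c y i = colorNbrs G c y i \ {x} := by
  ext w
  simp only [colorNbrs, SimpleGraph.deleteEdges_adj, Set.mem_singleton_iff, Set.mem_sdiff,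
    Set.mem_ofPred_eq]
  constructor
  · rintro ⟨⟨hyw, hne⟩, hw⟩
    exact ⟨⟨hyw, hw⟩, fun h => hne (h ▸ Sym2.eq_swap)⟩
  · rintro ⟨⟨hyw, hw⟩, hwx⟩
    refine ⟨⟨hyw, fun h => hwx ?_⟩, hw⟩
    rcases Sym2.eq_iff.mp h with ⟨rfl, rfl⟩ | ⟨-, rfl⟩
    exacts [(G.loopless.irrefl _ hyw).elim, rfl]

variable [DecidableEq V] {x v : V} {a i : ℕ}

theorem colorNbrs_update_subset_insert :
    colorNbrs G (update c x a) v i ⊆ insert x (colorNbrs G c v i) := by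
  rintro w ⟨hvw, hw⟩
  rcases eq_or_ne w x with rfl | hwx
  · exact Set.mem_insert _ _
  · exact Set.mem_insert_of_mem _ ⟨hvw, by rwa [update_of_ne hwx] at hw⟩

theorem colorNbrs_update_subset_sdiff (ha : a ≠ i) :
    colorNbrs G (update c x a) v i ⊆ colorNbrs G c v i \ {x} := by
  rintro w ⟨hvw, hw⟩
  rcases eq_or_ne w x with rfl | hwx
  · exact absurd (by rwa [update_self] at hw) ha
  · exact ⟨⟨hvw, by rwa [update_of_ne hwx] at hw⟩, hwx⟩

theorem colorNbrs_update_subset (h : G.Adj v x → a ≠ i) :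
    colorNbrs G (update c x a) v i ⊆ colorNbrs G c v i := by
  intro w hw
  rcases eq_or_ne w x with rfl | hwx
  · exact absurd (by simpa using hw.2) (h hw.1)
  · exact ⟨hw.1, by rw [← hw.2, update_of_ne hwx]⟩

theorem ncard_colorNbrs_update_update_le [Finite V] {q : V} (hq : q ∈ colorNbrs G c v i)
    (ha : a ≠ i) :
    (colorNbrs G (update (update c q a) x i) v i).ncard ≤ (colorNbrs G c v i).ncard := by
  have hsub : colorNbrs G (update (update c q a) x i) v i ⊆ insert x (colorNbrs G c v i \ {q}) :=
    colorNbrs_update_subset_insert.trans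
      (Set.insert_subset_insert (colorNbrs_update_subset_sdiff ha))
  have := (Set.ncard_le_ncard hsub).trans (Set.ncard_insert_le x _)
  have := Set.ncard_sdiff_singleton_add_one hq
  omega

theorem update_eq_three_or_four (hc : ∀ w, c w = 3 ∨ c w = 4) (ha : a = 3 ∨ a = 4) (w : V) :
    update c x a w = 3 ∨ update c x a w = 4 := by
  rcases eq_or_ne w x with rfl | hwx
  · simpa using ha
  · simpa [hwx] using hc w

end ColorNbrs

section Neighbors

variable {V : Type*} {G : SimpleGraph V} {v a b : V}

theorem adj_iff_of_neighborSet_eq (h : G.neighborSet v = {a, b}) {w : V} :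
    G.Adj v w ↔ w = a ∨ w = b := by
  rw [← G.mem_neighborSet, h, Set.mem_insert_iff, Set.mem_singleton_iff]

theorem adj_left_of_neighborSet_eq (h : G.neighborSet v = {a, b}) : G.Adj v a :=
  (adj_iff_of_neighborSet_eq h).2 (Or.inl rfl)

theorem adj_right_of_neighborSet_eq (h : G.neighborSet v = {a, b}) : G.Adj v b :=
  (adj_iff_of_neighborSet_eq h).2 (Or.inr rfl)

theorem degN_le_two_of_neighborSet_eq (h : G.neighborSet v = {a, b}) : degN G v ≤ 2 := by
  change (G.neighborSet v).ncard ≤ 2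
  rw [h]
  exact (Set.ncard_insert_le a {b}).trans (by simp)

theorem neighborSet_eq_pair [Finite V] (h : degN G v = 2) (ha : G.Adj v a) (hb : G.Adj v b)
    (hab : a ≠ b) : G.neighborSet v = {a, b} := by
  refine (Set.eq_of_subset_of_ncard_le ?_ ?_).symm
  · simp [Set.insert_subset_iff, ha, hb]
  · rw [Set.ncard_pair hab]
    exact h.le

end Neighbors

section Recoloring

variable {V : Type*} {G : SimpleGraph V} {c : V → ℕ}

theorem exists_lt_ncard_colorNbrs (hG : ¬ Colorable34 G) (hc : ∀ v, c v = 3 ∨ c v = 4) :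
    ∃ v, c v < (colorNbrs G c v (c v)).ncard := by
  by_contra! h
  exact hG ⟨c, hc, h⟩

variable {x y : V} (hc : IsColoring34 (G.deleteEdges {s(x, y)}) c)
include hc

theorem ncard_colorNbrs_sdiff_le_right {i : ℕ} (hcy : c y = i) :
    (colorNbrs G c y i \ {x}).ncard ≤ i := by
  subst hcy
  rw [← colorNbrs_deleteEdges_right]
  exact hc.2 y

variable [Finite V]

theorem ncard_colorNbrs_le_of_ne_right (hx : degN G x ≤ 3) {v : V} (hvy : v ≠ y) :
    (colorNbrs G c v (c v)).ncard ≤ c v := by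
  rcases eq_or_ne v x with rfl | hvx
  · exact ncard_colorNbrs_le_of_degN_le hx (hc.1 v) _
  · rw [← colorNbrs_deleteEdges_of_ne hvx hvy]
    exact hc.2 v

variable (hG : ¬ Colorable34 G)
include hG

theorem color_eq_three_of_deleteEdges (hx : degN G x ≤ 3) (hy : degN G y ≤ 5) :
    c x = 3 ∧ c y = 3 ∧ (colorNbrs G c y 3).ncard = 4 := by
  classical
  obtain ⟨v, hv⟩ := exists_lt_ncard_colorNbrs hG hc.1
  obtain rfl : y = v := by
    by_contra hvy
    exact hv.not_ge (ncard_colorNbrs_le_of_ne_right hc hx (Ne.symm hvy))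
  have hle := ncard_colorNbrs_sdiff_le_right hc rfl
  have hxy : x ∈ colorNbrs G c y (c y) := by
    by_contra hxy
    rw [Set.sdiff_singleton_eq_self hxy] at hle
    omega
  have hcard := Set.ncard_sdiff_singleton_add_one hxy
  have hcy : c y = 3 := by
    refine (hc.1 y).resolve_right fun hcy => ?_
    have h3 : colorNbrs G c y 3 = ∅ := by
      have := ncard_colorNbrs_three_add_four (G := G) hc.1 y
      rw [hcy] at hcard hle hv
      rw [← Set.ncard_eq_zero]
      omega
    obtain ⟨w, hw⟩ := exists_lt_ncard_colorNbrs (c := update c y 3) hG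
      (update_eq_three_or_four hc.1 (Or.inl rfl))
    rcases eq_or_ne w y with rfl | hwy
    · rw [update_self] at hw
      refine hw.not_ge ((Set.ncard_le_ncard
        (colorNbrs_update_subset fun h => (G.loopless.irrefl w h).elim)).trans ?_)
      simp [h3]
    · rw [update_of_ne hwy] at hw
      refine hw.not_ge ((Set.ncard_le_ncard (colorNbrs_update_subset fun hwy' h3w => ?_)).trans
        (ncard_colorNbrs_le_of_ne_right hc hx hwy))
      exact (h3 ▸ (⟨hwy'.symm, h3w.symm⟩ : w ∈ colorNbrs G c y 3) : w ∈ (∅ : Set V))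
  rw [hcy] at hcard hle hv
  exact ⟨hxy.2.trans hcy, hcy, by omega⟩

theorem color_eq_three_of_adj (hx : degN G x ≤ 3) (hy : degN G y ≤ 5) {z : V} (hyz : G.Adj y z)
    (hzx : z ≠ x) (hz : degN G z ≤ 3) : c z = 3 := by
  classical
  obtain ⟨-, -, h3⟩ := color_eq_three_of_deleteEdges hc hG hx hy
  have h4 : (colorNbrs G c y 4).ncard ≤ 1 := by
    have := ncard_colorNbrs_three_add_four (G := G) hc.1 y
    omega
  refine (hc.1 z).resolve_right fun hz4 => ?_
  have hc' := update_eq_three_or_four (x := y) hc.1 (Or.inr rfl)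
  obtain ⟨v, hv⟩ := exists_lt_ncard_colorNbrs (c := update c y 4) hG hc'
  rcases eq_or_ne v y with rfl | hvy
  · rw [update_self] at hv
    refine hv.not_ge ((Set.ncard_le_ncard (colorNbrs_update_subset fun h => ?_)).trans
      (h4.trans (by norm_num)))
    exact (G.loopless.irrefl v h).elim
  rcases eq_or_ne v z with rfl | hvz
  · exact hv.not_ge (ncard_colorNbrs_le_of_degN_le hz (hc' v) _)
  rw [update_of_ne hvy] at hv
  refine hv.not_ge ((Set.ncard_le_ncard (colorNbrs_update_subset fun hvy' h4v => hvz ?_)).trans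
    (ncard_colorNbrs_le_of_ne_right hc hx hvy))
  exact (Set.ncard_le_one (Set.toFinite _)).mp h4 v ⟨hvy'.symm, h4v.symm⟩ z ⟨hyz, hz4⟩

theorem saturated34_four_of_neighborSet_eq (hy : degN G y ≤ 5) {p : V}
    (hx : G.neighborSet x = {y, p}) (hpy : p ≠ y) : Saturated34 G c 4 p := by
  classical
  have hx3 : degN G x ≤ 3 := (degN_le_two_of_neighborSet_eq hx).trans (by norm_num)
  obtain ⟨-, hcy, -⟩ := color_eq_three_of_deleteEdges hc hG hx3 hy
  have hpx : p ≠ x := by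
    rintro rfl
    exact G.loopless.irrefl p (adj_right_of_neighborSet_eq hx)
  have hp := ncard_colorNbrs_le_of_ne_right hc hx3 hpy
  have hc' := update_eq_three_or_four (x := x) hc.1 (Or.inr rfl)
  obtain ⟨v, hv⟩ := exists_lt_ncard_colorNbrs (c := update c x 4) hG hc'
  obtain rfl : p = v := by
    by_contra hpv
    rcases eq_or_ne v x with rfl | hvx
    · exact hv.not_ge (ncard_colorNbrs_le_of_degN_le hx3 (hc' v) _)
    rw [update_of_ne hvx] at hv
    rcases eq_or_ne v y with rfl | hvy
    · rw [hcy] at hv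
      exact hv.not_ge ((Set.ncard_le_ncard (colorNbrs_update_subset_sdiff (by norm_num))).trans
        (ncard_colorNbrs_sdiff_le_right hc hcy))
    · refine hv.not_ge ((Set.ncard_le_ncard (colorNbrs_update_subset fun h => ?_)).trans
        (ncard_colorNbrs_le_of_ne_right hc hx3 hvy))
      rcases (adj_iff_of_neighborSet_eq hx).1 h.symm with h | h
      exacts [(hvy h).elim, (hpv h.symm).elim]
  rw [update_of_ne hpx] at hv
  have hcp : c p = 4 := by
    refine (hc.1 p).resolve_left fun hcp => ?_
    rw [hcp] at hv hp
    exact hv.not_ge ((Set.ncard_le_ncard (colorNbrs_update_subset fun _ => by norm_num)).trans hp)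
  rw [hcp] at hv hp
  have := (Set.ncard_le_ncard (colorNbrs_update_subset_insert (a := 4))).trans
    (Set.ncard_insert_le x (colorNbrs G c p 4))
  exact ⟨hcp, (by omega : (colorNbrs G c p 4).ncard = 4)⟩

theorem ncard_colorNbrs_three_le_two (hy : degN G y ≤ 5) {p : V}
    (hx : G.neighborSet x = {y, p}) (hpy : p ≠ y) (hp : degN G p ≤ 6) :
    (colorNbrs G c p 3).ncard ≤ 2 := by
  have hp4 := (saturated34_four_of_neighborSet_eq hc hG hy hx hpy).2
  have := ncard_colorNbrs_three_add_four (G := G) hc.1 p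
  change (colorNbrs G c p 4).ncard = 4 at hp4
  omega

theorem color_eq_four_of_adj (hy : degN G y ≤ 5) {p q : V} (hx : G.neighborSet x = {y, p})
    (hpy : p ≠ y) (hpy' : ¬ G.Adj p y) (hp : degN G p ≤ 6) (hpq : G.Adj p q) (hqx : q ≠ x)
    (hq : degN G q ≤ 3) : c q = 4 := by
  classical
  have hx3 : degN G x ≤ 3 := (degN_le_two_of_neighborSet_eq hx).trans (by norm_num)
  obtain ⟨hcx, hcy, -⟩ := color_eq_three_of_deleteEdges hc hG hx3 hy
  have hxp : G.Adj x p := adj_right_of_neighborSet_eq hx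
  have hp3 := ncard_colorNbrs_three_le_two hc hG hy hx hpy hp
  refine (hc.1 q).resolve_left fun hcq => ?_
  have hp3_eq : colorNbrs G c p 3 = {x, q} := by
    refine (Set.eq_of_subset_of_ncard_le ?_ ?_).symm
    · simp [Set.insert_subset_iff, colorNbrs, hxp.symm, hpq, hcx, hcq]
    · rwa [Set.ncard_pair hqx.symm]
  have hc' := update_eq_three_or_four (update_eq_three_or_four (x := x) hc.1 (Or.inr rfl))
    (x := p) (Or.inl rfl)
  obtain ⟨v, hv⟩ := exists_lt_ncard_colorNbrs (c := update (update c x 4) p 3) hG hc'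
  rcases eq_or_ne v x with rfl | hvx
  · exact hv.not_ge (ncard_colorNbrs_le_of_degN_le hx3 (hc' v) _)
  rcases eq_or_ne v q with rfl | hvq
  · exact hv.not_ge (ncard_colorNbrs_le_of_degN_le hq (hc' v) _)
  rcases eq_or_ne v p with rfl | hvp
  · rw [update_self] at hv
    refine hv.not_ge ((Set.ncard_le_ncard ?_).trans (hp3.trans (by norm_num)))
    exact (colorNbrs_update_subset fun h => (G.loopless.irrefl v h).elim).trans
      (colorNbrs_update_subset fun _ => by norm_num)
  rw [update_of_ne hvp, update_of_ne hvx] at hv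
  rcases eq_or_ne v y with rfl | hvy
  · rw [hcy] at hv
    refine hv.not_ge ((Set.ncard_le_ncard ?_).trans (ncard_colorNbrs_sdiff_le_right hc hcy))
    exact (colorNbrs_update_subset fun h => (hpy' h.symm).elim).trans
      (colorNbrs_update_subset_sdiff (by norm_num))
  refine hv.not_ge ((Set.ncard_le_ncard ?_).trans (ncard_colorNbrs_le_of_ne_right hc hx3 hvy))
  refine (colorNbrs_update_subset fun hvp' h3 => ?_).trans (colorNbrs_update_subset fun hvx' => ?_)
  · have : v ∈ colorNbrs G c p 3 := ⟨hvp'.symm, h3.symm⟩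
    rw [hp3_eq] at this
    rcases this with h | h
    exacts [hvx h, hvq h]
  · rcases (adj_iff_of_neighborSet_eq hx).1 hvx'.symm with h | h
    exacts [(hvy h).elim, (hvp h).elim]

theorem color_eq_three_of_color_eq_four (hy : degN G y ≤ 5) {p q r : V}
    (hx : G.neighborSet x = {y, p}) (hpy : p ≠ y) (hq : G.neighborSet q = {p, r}) (hry : r ≠ y)
    (hcq : c q = 4) : c r = 3 := by
  classical
  have hx3 : degN G x ≤ 3 := (degN_le_two_of_neighborSet_eq hx).trans (by norm_num)
  have hq3 : degN G q ≤ 3 := (degN_le_two_of_neighborSet_eq hq).trans (by norm_num)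
  obtain ⟨hcx, hcy, -⟩ := color_eq_three_of_deleteEdges hc hG hx3 hy
  obtain ⟨hcp, hp4⟩ := saturated34_four_of_neighborSet_eq hc hG hy hx hpy
  change (colorNbrs G c p 4).ncard = 4 at hp4
  have hqx : q ≠ x := by rintro rfl; omega
  have hqp : q ∈ colorNbrs G c p 4 := ⟨(adj_left_of_neighborSet_eq hq).symm, hcq⟩
  refine (hc.1 r).resolve_right fun hcr => ?_
  have hc' := update_eq_three_or_four (update_eq_three_or_four (x := q) hc.1 (Or.inl rfl))
    (x := x) (Or.inr rfl)
  obtain ⟨v, hv⟩ := exists_lt_ncard_colorNbrs (c := update (update c q 3) x 4) hG hc'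
  rcases eq_or_ne v x with rfl | hvx
  · exact hv.not_ge (ncard_colorNbrs_le_of_degN_le hx3 (hc' v) _)
  rcases eq_or_ne v q with rfl | hvq
  · exact hv.not_ge (ncard_colorNbrs_le_of_degN_le hq3 (hc' v) _)
  rw [update_of_ne hvx, update_of_ne hvq] at hv
  rcases eq_or_ne v y with rfl | hvy
  · rw [hcy] at hv
    refine hv.not_ge ((Set.ncard_le_ncard ?_).trans (ncard_colorNbrs_sdiff_le_right hc hcy))
    refine (colorNbrs_update_subset_sdiff (by norm_num)).trans (Set.sdiff_subset_sdiff_left ?_)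
    refine colorNbrs_update_subset fun h => ?_
    rcases (adj_iff_of_neighborSet_eq hq).1 h.symm with h | h
    exacts [(hpy h.symm).elim, (hry h.symm).elim]
  rcases eq_or_ne v p with rfl | hvp
  · rw [hcp] at hv
    exact hv.not_ge ((ncard_colorNbrs_update_update_le hqp (by norm_num)).trans hp4.le)
  have hvx' : ¬ G.Adj v x := fun h => by
    rcases (adj_iff_of_neighborSet_eq hx).1 h.symm with h | h
    exacts [hvy h, hvp h]
  refine hv.not_ge ((Set.ncard_le_ncard ((colorNbrs_update_subset fun h => (hvx' h).elim).trans
    (colorNbrs_update_subset fun hvq' => ?_))).trans (ncard_colorNbrs_le_of_ne_right hc hx3 hvy))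
  rcases (adj_iff_of_neighborSet_eq hq).1 hvq'.symm with h | h
  · exact (hvp h).elim
  · subst h
    omega

theorem color_eq_four_of_neighborSet_eq (hx : degN G x ≤ 3) (hy : degN G y ≤ 5) {r z : V}
    (hz : G.neighborSet z = {y, r}) (hzx : z ≠ x) (hry : r ≠ y) : c r = 4 := by
  classical
  have hz3 : degN G z ≤ 3 := (degN_le_two_of_neighborSet_eq hz).trans (by norm_num)
  have hyz : G.Adj y z := (adj_left_of_neighborSet_eq hz).symm
  have hcz := color_eq_three_of_adj hc hG hx hy hyz hzx hz3
  obtain ⟨-, hcy, hy4⟩ := color_eq_three_of_deleteEdges hc hG hx hy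
  refine (hc.1 r).resolve_left fun hcr => ?_
  have hc' := update_eq_three_or_four (x := z) hc.1 (Or.inr rfl)
  obtain ⟨v, hv⟩ := exists_lt_ncard_colorNbrs (c := update c z 4) hG hc'
  rcases eq_or_ne v z with rfl | hvz
  · exact hv.not_ge (ncard_colorNbrs_le_of_degN_le hz3 (hc' v) _)
  rw [update_of_ne hvz] at hv
  rcases eq_or_ne v y with rfl | hvy
  · rw [hcy] at hv
    have := Set.ncard_sdiff_singleton_add_one (show z ∈ colorNbrs G c v 3 from ⟨hyz, hcz⟩)
    exact hv.not_ge ((Set.ncard_le_ncard (colorNbrs_update_subset_sdiff (by norm_num))).trans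
      (by omega))
  refine hv.not_ge ((Set.ncard_le_ncard (colorNbrs_update_subset fun hvz' => ?_)).trans
    (ncard_colorNbrs_le_of_ne_right hc hx hvy))
  rcases (adj_iff_of_neighborSet_eq hz).1 hvz'.symm with h | rfl
  · exact (hvy h).elim
  · omega

end Recoloring

theorem seven_le_degN_of_neighborSet_eq {V : Type*} [Finite V] {G : SimpleGraph V}
    (hG : MinNonColorable34 G) {x y p q r z : V} (hy : degN G y ≤ 5)
    (hx : G.neighborSet x = {y, p}) (hq : G.neighborSet q = {p, r})
    (hz : G.neighborSet z = {y, r}) (hpy : p ≠ y) (hpy' : ¬ G.Adj p y) (hry : r ≠ y)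
    (hqx : q ≠ x) (hzx : z ≠ x) : 7 ≤ degN G p := by
  by_contra! hp
  obtain ⟨c, hc⟩ := hG.2.2 s(x, y) (adj_left_of_neighborSet_eq hx)
  have hx3 : degN G x ≤ 3 := (degN_le_two_of_neighborSet_eq hx).trans (by norm_num)
  have hq3 : degN G q ≤ 3 := (degN_le_two_of_neighborSet_eq hq).trans (by norm_num)
  have hpq : G.Adj p q := (adj_left_of_neighborSet_eq hq).symm
  have hcq := color_eq_four_of_adj hc hG.1 hy hx hpy hpy' (by omega) hpq hqx hq3
  have hcr3 := color_eq_three_of_color_eq_four hc hG.1 hy hx hpy hq hry hcq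
  have hcr4 := color_eq_four_of_neighborSet_eq hc hG.1 hx3 hy hz hzx hry
  omega

/-- In a minimally non-(3,4)-colorable graph of girth at least 5, if
`u₁u₂u₃u₄u₅u₆` is a 6-cycle with `u₁, u₃, u₅` of degree 2 and `u₄` of degree 5,
then `u₂` and `u₆` both have degree at least 7. -/
theorem stmt_9 {V : Type*} [Fintype V] (G : SimpleGraph V)
    (hG : MinNonColorable34 G) (hgirth : GirthAtLeast5 G)
    (u1 u2 u3 u4 u5 u6 : V)
    (hnd : ([u1, u2, u3, u4, u5, u6] : List V).Nodup)
    (a12 : G.Adj u1 u2) (a23 : G.Adj u2 u3) (a34 : G.Adj u3 u4)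
    (a45 : G.Adj u4 u5) (a56 : G.Adj u5 u6) (a61 : G.Adj u6 u1)
    (d1 : degN G u1 = 2) (d3 : degN G u3 = 2) (d5 : degN G u5 = 2)
    (d4 : degN G u4 = 5) :
    7 ≤ degN G u2 ∧ 7 ≤ degN G u6 := by
  simp only [List.nodup_cons, List.mem_cons, List.not_mem_nil, or_false, List.nodup_nil,
    and_true, not_or] at hnd
  obtain ⟨⟨-, h13, -, h15, -⟩, ⟨-, h24, -, h26⟩, ⟨-, h35, -⟩, ⟨-, h46⟩, -⟩ := hnd
  have N1 := neighborSet_eq_pair d1 a12 a61.symm h26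
  have N3 := neighborSet_eq_pair d3 a34 a23.symm (Ne.symm h24)
  have N5 := neighborSet_eq_pair d5 a45.symm a56 h46
  exact ⟨seven_le_degN_of_neighborSet_eq hG d4.le N3 N1 N5 h24
      (fun h => hgirth.1 u2 u3 u4 a23 a34 h.symm) (Ne.symm h46) h13 (Ne.symm h35),
    seven_le_degN_of_neighborSet_eq hG d4.le N5 (Set.pair_comm u2 u6 ▸ N1) N3 (Ne.symm h46)
      (hgirth.1 u4 u5 u6 a45 a56) h24 h15 h35⟩
end
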